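/- arXiv:2504.11388 — 2 statements merged into one kernel-verified Lean document; each statement's English description precedes it below -/
import Mathlib

section
/- Let R ∈ ℕ, f : ℕ^R → ℂ be any function and g_1,...,g_R : [1,∞) → ℂ be of class C¹. For x_1,...,x_R ≥ 1 set F(x_1,...,x_R) := Σ_{n_1 ≤ x_1,...,n_R ≤ x_R} f(n_1,...,n_R). Then Σ_{n ∈ ℕ^R, n_j ≤ x_j ∀j} f(n)·∏_{j=1}^R g_j(n_j) = Σ_{S ⊆ {1,...,R}} (−1)^{#S} (∏_{j ∉ S} g_j(x_j)) · T_S, where T_S := ∫_{t_j ∈ [1, x_j] for j ∈ S} F(y) ∏_{j ∈ S} g'_j(t_j) dt, with y the vector whose j-th coordinate is x_j for j ∉ S and t_j for j ∈ S. -/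
open scoped BigOperators
open MeasureTheory Filter

noncomputable section

/-- The ideal of `R × R` minors of the Jacobian matrix of the system `f` over `ℂ`. -/
def jacIdeal {R n : ℕ} (f : Fin R → MvPolynomial (Fin (n + 1)) ℤ) :
    Ideal (MvPolynomial (Fin (n + 1)) ℂ) :=
  Ideal.span {g | ∃ s : Fin R ↪ Fin (n + 1),
    g = (Matrix.of fun i j : Fin R =>
      MvPolynomial.pderiv (s j) (MvPolynomial.map (Int.castRingHom ℂ) (f i))).det}

/-- The locus where the Jacobian of `f` has rank `< R` has codimension `B` in `ℂ^{n+1}`: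
its coordinate ring has Krull dimension `n + 1 - B`. -/
def BirchCodim {R n : ℕ} (f : Fin R → MvPolynomial (Fin (n + 1)) ℤ) (B : ℕ) : Prop :=
  ringKrullDim (MvPolynomial (Fin (n + 1)) ℂ ⧸ jacIdeal f) + (B : WithBot ℕ∞) =
    ((n + 1 : ℕ) : WithBot ℕ∞)

/-- Birch's condition `𝔅 > R(R+1)2^{d-1}(d-1)`. -/
def BirchCondition {R n : ℕ} (d : ℕ) (f : Fin R → MvPolynomial (Fin (n + 1)) ℤ) : Prop :=
  ∃ B : ℕ, BirchCodim f B ∧ R * (R + 1) * 2 ^ (d - 1) * (d - 1) < B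

/-- `m` is a norm from `ℚ(√D)/ℚ`. -/
def IsNormQD (D m : ℤ) : Prop := ∃ x y : ℚ, (m : ℚ) = x ^ 2 - (D : ℚ) * y ^ 2

/-- The Hilbert symbol `(D, a)_{ℚ_p} = 1`. -/
def HilbertQp (p : ℕ) (hp : p.Prime) (D a : ℤ) : Prop :=
  letI : Fact p.Prime := ⟨hp⟩
  ∃ x y : ℚ_[p], (a : ℚ_[p]) = x ^ 2 - (D : ℚ_[p]) * y ^ 2

/-- The Hilbert symbol `(D, a)_ℝ = 1`. -/
def HilbertR (D a : ℤ) : Prop := ∃ x y : ℝ, (a : ℝ) = x ^ 2 - (D : ℝ) * y ^ 2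

/-- Legendre symbol `(D/p)` (junk value `0` when `p` is not prime). -/
def legSym (p : ℕ) (D : ℤ) : ℤ := if h : p.Prime then @legendreSym p ⟨h⟩ D else 0

/-- Kronecker symbol `(D/m)` for odd `m`: the Jacobi symbol `(D/|m|)` multiplied by `-1`
when both `m < 0` and `D < 0`. -/
def kron (D m : ℤ) : ℤ := (if m < 0 ∧ D < 0 then -1 else 1) * jacobiSym D m.natAbs

/-- The primes `p ≤ z`. -/
def primesUpTo (z : ℕ) : Finset ℕ := Nat.primesBelow (z + 1)

/-- `W_z = ∏_{p ≤ z} p^{m_p}`. -/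
def Wmod (z : ℕ) (m : ℕ → ℕ) : ℕ := ∏ p ∈ primesUpTo z, p ^ m p

/-- `ε̃(z) = ∑_{p ≤ z} p^{-1-m_p}`. -/
def epsTilde (z : ℕ) (m : ℕ → ℕ) : ℝ := ∑ p ∈ primesUpTo z, (1 : ℝ) / (p : ℝ) ^ (1 + m p)

/-- `q_T = ∏_{p ≤ T} p^T`. -/
def qT (T : ℕ) : ℕ := ∏ p ∈ primesUpTo T, p ^ T

instance (z : ℕ) (m : ℕ → ℕ) : NeZero (Wmod z m) := ⟨by
  unfold Wmod
  exact Finset.prod_ne_zero_iff.mpr fun p hp =>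
    pow_ne_zero _ (Nat.prime_of_mem_primesBelow hp).ne_zero⟩

instance (T : ℕ) : NeZero (qT T) := ⟨by
  unfold qT
  exact Finset.prod_ne_zero_iff.mpr fun p hp =>
    pow_ne_zero _ (Nat.prime_of_mem_primesBelow hp).ne_zero⟩

/-- Evaluation of `f i` at the canonical integer representative of `t`. -/
def fval {R n : ℕ} (f : Fin R → MvPolynomial (Fin (n + 1)) ℤ) {q : ℕ}
    (t : Fin (n + 1) → ZMod q) (i : Fin R) : ℤ :=
  MvPolynomial.eval (fun j => ((t j).val : ℤ)) (f i)

/-- The quantity `γ_T(s) ∏_{p ≤ T}(1-1/p)^{-R/2}`. -/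
def gammaT {R n : ℕ} (f : Fin R → MvPolynomial (Fin (n + 1)) ℤ) (D : ℤ)
    (s : Fin R → ℤˣ) (T : ℕ) : ℝ :=
  (∏ p ∈ primesUpTo T, ((1 : ℝ) - (p : ℝ)⁻¹) ^ (-(R : ℝ) / 2)) *
    (Set.ncard {t : Fin (n + 1) → ZMod (qT T) |
      (∀ p ∈ primesUpTo T, p ≠ 2 → ¬ ((p : ℤ) ^ T ∣ ∏ i, fval f t i)) ∧
      ¬ ((2 : ℤ) ^ (T - 3) ∣ ∏ i, fval f t i) ∧
      (∀ p (hp : p.Prime), p ≤ T → HilbertQp p hp D (∏ i, fval f t i)) ∧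
      (∀ i, kron D ((s i : ℤ) * (fval f t i / (Int.gcd (fval f t i) (qT T) : ℤ))) = 1)} : ℝ) /
      (qT T : ℝ) ^ (n + 1)

section AbelHelpers

lemma abel_deriv_integrableOn (g : ℝ → ℂ) (hg : ContDiffOn ℝ 1 g (Set.Ici 1))
    {a b : ℝ} (ha : 1 ≤ a) :
    MeasureTheory.IntegrableOn (deriv g) (Set.Icc a b) := by
  have hsub : Set.Icc a b ⊆ Set.Ici (1 : ℝ) :=
    Set.Icc_subset_Ici_self.trans (Set.Ici_subset_Ici.mpr ha)
  have hcontD : ContinuousOn (derivWithin g (Set.Ici 1)) (Set.Icc a b) :=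
    (hg.continuousOn_derivWithin (uniqueDiffOn_Ici 1) le_rfl).mono hsub
  have hI : MeasureTheory.IntegrableOn (derivWithin g (Set.Ici 1)) (Set.Icc a b) :=
    hcontD.integrableOn_Icc
  refine hI.congr ?_
  have h0 : ∀ᵐ t : ℝ, t ≠ (1 : ℝ) := by
    have hv : MeasureTheory.volume ({1} : Set ℝ) = 0 := Real.volume_singleton
    exact MeasureTheory.ae_iff.mpr (by simpa [not_not, Set.setOf_eq_eq_singleton] using hv)
  filter_upwards [MeasureTheory.ae_restrict_of_ae h0,
    MeasureTheory.ae_restrict_mem measurableSet_Icc] with t ht1 ht2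
  exact derivWithin_of_mem_nhds (Ici_mem_nhds (lt_of_le_of_ne (ha.trans ht2.1) (Ne.symm ht1)))

lemma abel_ftc (g : ℝ → ℂ) (hg : ContDiffOn ℝ 1 g (Set.Ici 1)) {a b : ℝ}
    (ha : 1 ≤ a) (hab : a ≤ b) :
    ∫ t in Set.Icc a b, deriv g t = g b - g a := by
  rw [MeasureTheory.integral_Icc_eq_integral_Ioc, ← intervalIntegral.integral_of_le hab]
  refine intervalIntegral.integral_eq_sub_of_hasDeriv_right_of_le hab
    (hg.continuousOn.mono (Set.Icc_subset_Ici_self.trans (Set.Ici_subset_Ici.mpr ha)))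
    (fun t ht => ?_) ?_
  · have h1t : 1 < t := lt_of_le_of_lt ha ht.1
    exact (((hg.differentiableOn one_ne_zero) t h1t.le).differentiableAt
      (Ici_mem_nhds h1t)).hasDerivAt.hasDerivWithinAt
  · have hI := abel_deriv_integrableOn g hg (b := b) ha
    rw [← Set.uIcc_of_le hab] at hI
    exact hI.intervalIntegrable

lemma abel_key1d (g : ℝ → ℂ) (hg : ContDiffOn ℝ 1 g (Set.Ici 1)) {b : ℝ}
    {m : ℕ} (hm1 : 1 ≤ m) (hmb : (m : ℝ) ≤ b) :
    ∫ t in Set.Icc (1 : ℝ) b, (if (m : ℝ) ≤ t then deriv g t else 0) = g b - g (m : ℝ) := by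
  have hm1' : (1 : ℝ) ≤ (m : ℝ) := by exact_mod_cast hm1
  have hind : (fun t => if (m : ℝ) ≤ t then deriv g t else 0)
      = Set.indicator (Set.Ici (m : ℝ)) (deriv g) := by
    funext t; simp [Set.indicator_apply, Set.mem_Ici]
  rw [hind, MeasureTheory.setIntegral_indicator measurableSet_Ici]
  have hset : Set.Icc (1 : ℝ) b ∩ Set.Ici (m : ℝ) = Set.Icc (m : ℝ) b := by
    ext t
    simp only [Set.mem_inter_iff, Set.mem_Icc, Set.mem_Ici]
    constructor
    · rintro ⟨⟨-, h2⟩, h3⟩; exact ⟨h3, h2⟩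
    · rintro ⟨h1, h2⟩; exact ⟨⟨hm1'.trans h1, h2⟩, h1⟩
  rw [hset, abel_ftc g hg hm1' hmb]

lemma abel_integrable1d (g : ℝ → ℂ) (hg : ContDiffOn ℝ 1 g (Set.Ici 1)) {b : ℝ} (m : ℕ) :
    MeasureTheory.IntegrableOn (fun t => if (m : ℝ) ≤ t then deriv g t else 0)
      (Set.Icc (1 : ℝ) b) := by
  have hind : (fun t => if (m : ℝ) ≤ t then deriv g t else 0)
      = Set.indicator (Set.Ici (m : ℝ)) (deriv g) := by
    funext t; simp [Set.indicator_apply, Set.mem_Ici]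
  rw [hind]
  exact (abel_deriv_integrableOn g hg le_rfl).indicator measurableSet_Ici

lemma abel_indicator_pi {ι : Type*} [Fintype ι] (c : ℂ) (h : ι → ℝ → ℂ) (s : ι → Set ℝ) :
    Set.indicator (Set.univ.pi s) (fun t : ι → ℝ => c * ∏ j, h j (t j))
      = fun t => c * ∏ j, Set.indicator (s j) (h j) (t j) := by
  funext t
  by_cases ht : t ∈ Set.univ.pi s
  · rw [Set.indicator_of_mem ht]
    congr 1
    exact Finset.prod_congr rfl fun j _ => (Set.indicator_of_mem (ht j (Set.mem_univ j)) _).symm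
  · rw [Set.indicator_of_notMem ht]
    obtain ⟨j, hj⟩ : ∃ j, t j ∉ s j := by
      by_contra hc
      push_neg at hc
      exact ht fun j _ => hc j
    rw [Finset.prod_eq_zero (Finset.mem_univ j) (Set.indicator_of_notMem hj _), mul_zero]

end AbelHelpers

theorem statement4 (R : ℕ)
    (f : (Fin R → ℕ) → ℂ) (g : Fin R → ℝ → ℂ)
    (hg : ∀ j, ContDiffOn ℝ 1 (g j) (Set.Ici 1))
    (x : Fin R → ℝ) (hx : ∀ j, 1 ≤ x j)
    (F : (Fin R → ℝ) → ℂ)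
    (hF : ∀ y : Fin R → ℝ,
      F y = ∑ m ∈ Finset.Icc (fun _ => 1) (fun j => ⌊y j⌋₊), f m) :
    (∑ m ∈ Finset.Icc (fun _ => 1) (fun j => ⌊x j⌋₊), f m * ∏ j, g j (m j)) =
      ∑ S : Finset (Fin R), (-1 : ℂ) ^ S.card * (∏ j ∈ Sᶜ, g j (x j)) *
        ∫ t : {j // j ∈ S} → ℝ in Set.univ.pi fun j => Set.Icc (1 : ℝ) (x j.1),
          F (fun j => if h : j ∈ S then t ⟨j, h⟩ else x j) *
            ∏ j : {j // j ∈ S}, deriv (g j.1) (t j) := by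
  classical
  have key : ∀ S : Finset (Fin R),
      (∫ t : {j // j ∈ S} → ℝ in Set.univ.pi fun j => Set.Icc (1 : ℝ) (x j.1),
        F (fun j => if h : j ∈ S then t ⟨j, h⟩ else x j) *
          ∏ j : {j // j ∈ S}, deriv (g j.1) (t j)) =
      ∑ m ∈ Finset.Icc (fun _ => 1) (fun j => ⌊x j⌋₊),
        f m * ∏ j ∈ S, (g j (x j) - g j (m j)) := by
    intro S
    set box : Set ({j // j ∈ S} → ℝ) := Set.univ.pi fun j => Set.Icc (1 : ℝ) (x j.1)
      with hbox_def
    have hbox : MeasurableSet box := MeasurableSet.univ_pi fun j => measurableSet_Icc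
    have stepA : ∀ t ∈ box,
        F (fun j => if h : j ∈ S then t ⟨j, h⟩ else x j) *
          ∏ j : {j // j ∈ S}, deriv (g j.1) (t j)
        = ∑ m ∈ Finset.Icc (fun _ => 1) (fun j => ⌊x j⌋₊),
            f m * ∏ j : {j // j ∈ S},
              (if (m j.1 : ℝ) ≤ t j then deriv (g j.1) (t j) else 0) := by
      intro t ht
      have ht' : ∀ j : {j // j ∈ S}, t j ∈ Set.Icc (1 : ℝ) (x j.1) :=
        fun j => ht j (Set.mem_univ j)
      rw [hF]
      have hfilter :
          Finset.Icc (fun _ => 1) (fun j => ⌊(if h : j ∈ S then t ⟨j, h⟩ else x j)⌋₊)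
          = (Finset.Icc (fun _ => (1 : ℕ)) (fun j => ⌊x j⌋₊)).filter
              (fun m => ∀ j : {j // j ∈ S}, (m j.1 : ℝ) ≤ t j) := by
        ext m
        simp only [Finset.mem_filter, Finset.mem_Icc, Pi.le_def]
        constructor
        · rintro ⟨h1, h2⟩
          refine ⟨⟨h1, fun j => ?_⟩, fun j => ?_⟩
          · have hj2 := h2 j
            by_cases hj : j ∈ S
            · rw [dif_pos hj] at hj2
              exact hj2.trans (Nat.floor_le_floor (ht' ⟨j, hj⟩).2)
            · rwa [dif_neg hj] at hj2
          · have hj2 := h2 j.1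
            rw [dif_pos j.2] at hj2
            have h0 : (0 : ℝ) ≤ t ⟨j.1, j.2⟩ := le_trans zero_le_one (ht' ⟨j.1, j.2⟩).1
            have hle := (Nat.le_floor_iff h0).mp hj2
            simpa using hle
        · rintro ⟨⟨h1, h2⟩, h3⟩
          refine ⟨h1, fun j => ?_⟩
          by_cases hj : j ∈ S
          · rw [dif_pos hj]
            exact Nat.le_floor (h3 ⟨j, hj⟩)
          · rw [dif_neg hj]; exact h2 j
      rw [hfilter, Finset.sum_filter, Finset.sum_mul]
      refine Finset.sum_congr rfl fun m hm => ?_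
      by_cases hP : ∀ j : {j // j ∈ S}, (m j.1 : ℝ) ≤ t j
      · rw [if_pos hP]
        congr 1
        exact Finset.prod_congr rfl fun j _ => (if_pos (hP j)).symm
      · rw [if_neg hP, zero_mul]
        obtain ⟨j, hj⟩ := not_forall.mp hP
        have hz : (if ((m j.1 : ℝ)) ≤ t j then deriv (g j.1) (t j) else 0) = 0 := if_neg hj
        rw [Finset.prod_eq_zero (Finset.mem_univ j) hz, mul_zero]
    rw [MeasureTheory.setIntegral_congr_fun hbox stepA]
    have hint : ∀ m ∈ Finset.Icc (fun _ => (1 : ℕ)) (fun j => ⌊x j⌋₊),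
        MeasureTheory.IntegrableOn
          (fun t : {j // j ∈ S} → ℝ => f m * ∏ j : {j // j ∈ S},
            (if (m j.1 : ℝ) ≤ t j then deriv (g j.1) (t j) else 0)) box := by
      intro m _
      rw [← MeasureTheory.integrable_indicator_iff hbox, hbox_def,
        abel_indicator_pi (f m)
          (fun (j : {j // j ∈ S}) u => if ((m j.1 : ℝ)) ≤ u then deriv (g j.1) u else 0)
          (fun j => Set.Icc (1 : ℝ) (x j.1))]
      exact (MeasureTheory.Integrable.fintype_prod
        (f := fun (j : {j // j ∈ S}) =>
          Set.indicator (Set.Icc (1 : ℝ) (x j.1))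
            (fun u => if (m j.1 : ℝ) ≤ u then deriv (g j.1) u else 0))
        (fun j => (MeasureTheory.integrable_indicator_iff measurableSet_Icc).mpr
          (abel_integrable1d (g j.1) (hg j.1) (m j.1)))).const_mul (f m)
    rw [MeasureTheory.integral_finset_sum _ hint]
    refine Finset.sum_congr rfl fun m hm => ?_
    obtain ⟨hm1, hm2⟩ := Finset.mem_Icc.mp hm
    rw [← MeasureTheory.integral_indicator hbox, hbox_def,
      abel_indicator_pi (f m)
        (fun (j : {j // j ∈ S}) u => if ((m j.1 : ℝ)) ≤ u then deriv (g j.1) u else 0)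
        (fun j => Set.Icc (1 : ℝ) (x j.1)),
      MeasureTheory.integral_const_mul, MeasureTheory.integral_fintype_prod_volume_eq_prod,
      ← Finset.prod_coe_sort S (fun j => g j (x j) - g j (m j))]
    congr 1
    refine Finset.prod_congr rfl fun j _ => ?_
    rw [MeasureTheory.integral_indicator measurableSet_Icc]
    have h1m : 1 ≤ m j.1 := hm1 j.1
    have hmx : (m j.1 : ℝ) ≤ x j.1 :=
      (Nat.le_floor_iff (le_trans zero_le_one (hx j.1))).mp (hm2 j.1)
    exact abel_key1d (g j.1) (hg j.1) h1m hmx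
  calc (∑ m ∈ Finset.Icc (fun _ => 1) (fun j => ⌊x j⌋₊), f m * ∏ j, g j (m j))
      = ∑ m ∈ Finset.Icc (fun _ => 1) (fun j => ⌊x j⌋₊),
          f m * ∑ S : Finset (Fin R),
            (∏ j ∈ S, (g j (m j) - g j (x j))) * ∏ j ∈ Sᶜ, g j (x j) := by
        refine Finset.sum_congr rfl fun m _ => ?_
        rw [← Fintype.prod_add (fun j => g j (m j) - g j (x j)) (fun j => g j (x j))]
        congr 1
        exact Finset.prod_congr rfl fun j _ => by ring
    _ = ∑ S : Finset (Fin R), ∑ m ∈ Finset.Icc (fun _ => 1) (fun j => ⌊x j⌋₊),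
          f m * ((∏ j ∈ S, (g j (m j) - g j (x j))) * ∏ j ∈ Sᶜ, g j (x j)) := by
        simp_rw [Finset.mul_sum]
        exact Finset.sum_comm
    _ = ∑ S : Finset (Fin R), (-1 : ℂ) ^ S.card * (∏ j ∈ Sᶜ, g j (x j)) *
          ∑ m ∈ Finset.Icc (fun _ => 1) (fun j => ⌊x j⌋₊),
            f m * ∏ j ∈ S, (g j (x j) - g j (m j)) := by
        refine Finset.sum_congr rfl fun S _ => ?_
        rw [Finset.mul_sum]
        refine Finset.sum_congr rfl fun m _ => ?_
        have hneg : ∏ j ∈ S, (g j (m j) - g j (x j))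
            = (-1 : ℂ) ^ S.card * ∏ j ∈ S, (g j (x j) - g j (m j)) := by
          calc ∏ j ∈ S, (g j (m j) - g j (x j))
              = ∏ j ∈ S, (-1 : ℂ) * (g j (x j) - g j (m j)) :=
                Finset.prod_congr rfl fun j _ => by ring
            _ = (-1 : ℂ) ^ S.card * ∏ j ∈ S, (g j (x j) - g j (m j)) := by
                rw [Finset.prod_mul_distrib, Finset.prod_const]
        rw [hneg]; ring
    _ = ∑ S : Finset (Fin R), (-1 : ℂ) ^ S.card * (∏ j ∈ Sᶜ, g j (x j)) *
        ∫ t : {j // j ∈ S} → ℝ in Set.univ.pi fun j => Set.Icc (1 : ℝ) (x j.1),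
          F (fun j => if h : j ∈ S then t ⟨j, h⟩ else x j) *
            ∏ j : {j // j ∈ S}, deriv (g j.1) (t j) := by
        refine Finset.sum_congr rfl fun S _ => ?_
        rw [key S]
end
end

section
/- Let D be a squarefree integer ≠ 1 and a ∈ ℤ \ {0}. The projective conic x_0² − D x_1² = a x_2² has a ℚ-point (i.e. there exist x_0, x_1, x_2 ∈ ℚ, not all zero, with x_0² − D x_1² = a x_2²) if and only if all of the following hold: (1) if D < 0 then a > 0; (2) for every prime p ∤ 2D with Legendre symbol (D/p) = −1 one has 2 | v_p(a); (3) for every odd prime p | D with 2 | v_p(a) one has (a·p^{−v_p(a)}/p) = 1; (4) for every odd prime p | D with 2 ∤ v_p(a) one has (a·p^{−v_p(a)}/p) = ((−D/p)/p), where −D/p denotes the integer −D divided by p; (5) the conic x_0² − D x_1² = a x_2² has a ℚ_2-point (a nonzero solution over the field ℚ_2 of 2-adic numbers). -/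
open scoped BigOperators
open MeasureTheory Filter

noncomputable section

set_option maxHeartbeats 1000000


lemma int_not_square {D : ℤ} (hsf : Squarefree D) (hD1 : D ≠ 1) (n : ℤ) : n ^ 2 ≠ D := by
  intro h
  have hu : IsUnit n := hsf n (by rw [← h]; exact ⟨1, by ring⟩)
  rcases Int.isUnit_iff.mp hu with h1 | h1 <;> rw [h1] at h <;> norm_num at h <;>
    exact hD1 h.symm

lemma rat_not_square {D : ℤ} (hsf : Squarefree D) (hD1 : D ≠ 1) (q : ℚ) : q ^ 2 ≠ (D : ℚ) := by
  intro h
  have hden : (q.den : ℚ) ≠ 0 := by exact_mod_cast q.den_ne_zero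
  have hnum : (q.num : ℚ)^2 = (D : ℚ) * (q.den : ℚ)^2 := by
    rw [← Rat.num_div_den q] at h
    field_simp at h
    linear_combination h
  have hz : (q.num : ℤ)^2 = D * (q.den : ℤ)^2 := by exact_mod_cast hnum
  have hcop : IsCoprime (q.num) (q.den : ℤ) := by
    rw [Int.isCoprime_iff_gcd_eq_one]
    exact q.reduced
  have hdvd : ((q.den : ℤ))^2 ∣ q.num ^ 2 := ⟨D, by linarith [hz]⟩
  have hu : IsUnit (((q.den : ℤ))^2) := (hcop.symm.pow).isUnit_of_dvd hdvd
  have hd1 : ((q.den : ℤ))^2 = 1 := by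
    rcases Int.isUnit_iff.mp hu with h1 | h1
    · exact h1
    · nlinarith [sq_nonneg ((q.den : ℤ))]
  exact int_not_square hsf hD1 q.num (by rw [hz, hd1, mul_one])


lemma nat_sf_not_square {m : ℕ} (hm : Squarefree m) (h1 : m ≠ 1) (t : ℕ) : t * t ≠ m := by
  intro h
  have hu : IsUnit t := hm t (h ▸ dvd_refl _)
  rw [Nat.isUnit_iff] at hu
  rw [hu] at h
  exact h1 h.symm

lemma prime_lf_aux {q : ℕ} (hq : q.Prime) (A B C : ℤ) (hqC : (q:ℤ) ∣ C)
    (hqA : ¬ (q:ℤ) ∣ A) {r : ℤ} (hr : (q:ℤ) ∣ r^2 + A*B) :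
    ∀ x y z : ℤ, (q:ℤ) ∣ (A*x + r*y + 0*z) → (q:ℤ) ∣ (A*x^2 + B*y^2 + C*z^2) := by
  intro x y z h
  have hqp : Prime (q:ℤ) := Nat.prime_iff_prime_int.mp hq
  have h1 : (q:ℤ) ∣ (A*x + r*y) := by simpa using h
  have key : (q:ℤ) ∣ A * (A*x^2 + B*y^2) := by
    have e : A * (A*x^2 + B*y^2) = (A*x + r*y)*(A*x - r*y) + (r^2 + A*B)*y^2 := by ring
    rw [e]
    exact dvd_add (h1.mul_right _) (hr.mul_right _)
  have h2 : (q:ℤ) ∣ (A*x^2 + B*y^2) := (hqp.dvd_or_dvd key).resolve_left hqA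
  have e2 : A*x^2 + B*y^2 + C*z^2 = (A*x^2+B*y^2) + C*z^2 := by ring
  rw [e2]; exact dvd_add h2 (hqC.mul_right _)

lemma prime_lf (q : ℕ) (hq : q.Prime) (A B C : ℤ)
    (cAB : IsCoprime A B) (cAC : IsCoprime A C) (cBC : IsCoprime B C)
    (hypA : q ≠ 2 → (q:ℤ) ∣ A → ∃ r : ℤ, (q:ℤ) ∣ r^2 + B*C)
    (hypB : q ≠ 2 → (q:ℤ) ∣ B → ∃ r : ℤ, (q:ℤ) ∣ r^2 + A*C)
    (hypC : q ≠ 2 → (q:ℤ) ∣ C → ∃ r : ℤ, (q:ℤ) ∣ r^2 + A*B)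
    (hdvd : (q:ℤ) ∣ A*B*C) :
    ∃ α β γ : ℤ, ∀ x y z : ℤ, (q:ℤ) ∣ (α*x+β*y+γ*z) → (q:ℤ) ∣ (A*x^2+B*y^2+C*z^2) := by
  have hqp : Prime (q:ℤ) := Nat.prime_iff_prime_int.mp hq
  by_cases hq2 : q = 2
  · subst hq2
    refine ⟨A, B, C, fun x y z h => ?_⟩
    have e : A*x^2+B*y^2+C*z^2 = (A*x+B*y+C*z) + (A*(x^2-x)+B*(y^2-y)+C*(z^2-z)) := by ring
    have d2 : ∀ t : ℤ, ((2:ℕ):ℤ) ∣ (t^2 - t) := by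
      intro t
      have := Int.even_mul_succ_self (t - 1)
      have h2 : t^2 - t = (t-1)*(t-1+1) := by ring
      rw [h2]
      exact_mod_cast this.two_dvd
    rw [e]
    exact dvd_add h (dvd_add (dvd_add ((d2 x).mul_left A) ((d2 y).mul_left B)) ((d2 z).mul_left C))
  · rcases (hqp.dvd_mul.mp hdvd) with hAB | hCc
    · rcases hqp.dvd_mul.mp hAB with hAc | hBc
      · -- q ∣ A
        obtain ⟨r, hr⟩ := hypA hq2 hAc
        have hqB : ¬ (q:ℤ) ∣ B := fun hB => hqp.not_unit (cAB.isUnit_of_dvd' hAc hB)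
        have aux := prime_lf_aux hq B C A hAc hqB (r := r) hr
        refine ⟨0, B, r, fun x y z h => ?_⟩
        have h' : (q:ℤ) ∣ (B*y + r*z + 0*x) := by
          have e : B*y + r*z + 0*x = 0*x+B*y+r*z := by ring
          rw [e]; exact h
        have := aux y z x h'
        have e : A*x^2+B*y^2+C*z^2 = B*y^2 + C*z^2 + A*x^2 := by ring
        rw [e]; exact this
      · -- q ∣ B
        obtain ⟨r, hr⟩ := hypB hq2 hBc
        have hqC : ¬ (q:ℤ) ∣ C := fun hC => hqp.not_unit (cBC.isUnit_of_dvd' hBc hC)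
        have aux := prime_lf_aux hq C A B hBc hqC (r := r) (by rwa [mul_comm A C] at hr)
        refine ⟨r, 0, C, fun x y z h => ?_⟩
        have h' : (q:ℤ) ∣ (C*z + r*x + 0*y) := by
          have e : C*z + r*x + 0*y = r*x+0*y+C*z := by ring
          rw [e]; exact h
        have := aux z x y h'
        have e : A*x^2+B*y^2+C*z^2 = C*z^2 + A*x^2 + B*y^2 := by ring
        rw [e]; exact this
    · -- q ∣ C
      obtain ⟨r, hr⟩ := hypC hq2 hCc
      have hqA : ¬ (q:ℤ) ∣ A := fun hA => hqp.not_unit (cAC.isUnit_of_dvd' hA hCc)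
      exact ⟨A, r, 0, prime_lf_aux hq A B C hCc hqA hr⟩

lemma lf_of_squarefree (A B C : ℤ)
    (cAB : IsCoprime A B) (cAC : IsCoprime A C) (cBC : IsCoprime B C)
    (hypA : ∀ q : ℕ, q.Prime → q ≠ 2 → (q:ℤ) ∣ A → ∃ r : ℤ, (q:ℤ) ∣ r^2 + B*C)
    (hypB : ∀ q : ℕ, q.Prime → q ≠ 2 → (q:ℤ) ∣ B → ∃ r : ℤ, (q:ℤ) ∣ r^2 + A*C)
    (hypC : ∀ q : ℕ, q.Prime → q ≠ 2 → (q:ℤ) ∣ C → ∃ r : ℤ, (q:ℤ) ∣ r^2 + A*B) :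
    ∀ N : ℕ, Squarefree N → ((N:ℤ) ∣ A*B*C) → ∃ α β γ : ℤ, ∀ x y z : ℤ,
      ((N:ℤ) ∣ α*x+β*y+γ*z) → ((N:ℤ) ∣ A*x^2+B*y^2+C*z^2) := by
  intro N
  induction N using Nat.strong_induction_on with
  | _ N ih =>
  intro hsf hdvd
  by_cases hN1 : N = 1
  · exact ⟨0, 0, 0, fun x y z _ => by simp [hN1]⟩
  have hN0 : N ≠ 0 := by rintro rfl; simpa using hsf.ne_zero rfl
  set q := N.minFac with hqdef
  have hq : q.Prime := Nat.minFac_prime hN1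
  have hqN : q ∣ N := N.minFac_dvd
  obtain ⟨M, hNM⟩ := hqN
  have hM0 : M ≠ 0 := by rintro rfl; exact hN0 (by simp [hNM])
  have hMN : M < N := by
    rw [hNM]
    calc M < 2 * M := by omega
    _ ≤ q * M := Nat.mul_le_mul_right _ hq.two_le
  have hsfM : Squarefree M := hsf.squarefree_of_dvd ⟨q, by rw [hNM]; ring⟩
  have hMdvd : (M:ℤ) ∣ A*B*C := dvd_trans (Int.natCast_dvd_natCast.mpr ⟨q, by rw [hNM]; ring⟩) hdvd
  have hqdvd : (q:ℤ) ∣ A*B*C := dvd_trans (Int.natCast_dvd_natCast.mpr ⟨M, hNM⟩) hdvd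
  have hqM : ¬ q ∣ M := by
    intro hd
    obtain ⟨k, hk⟩ := hd
    have : ¬ IsUnit q := hq.not_isUnit
    exact this (hsf q ⟨k, by rw [hNM, hk]; ring⟩)
  have hcop : IsCoprime (q:ℤ) (M:ℤ) := by
    rw [Int.isCoprime_iff_gcd_eq_one, Int.gcd_natCast_natCast]
    exact (Nat.Prime.coprime_iff_not_dvd hq).mpr hqM
  obtain ⟨α₁, β₁, γ₁, h₁⟩ := prime_lf q hq A B C cAB cAC cBC
    (fun h2 hd => hypA q hq h2 hd) (fun h2 hd => hypB q hq h2 hd) (fun h2 hd => hypC q hq h2 hd)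
    hqdvd
  obtain ⟨α₂, β₂, γ₂, h₂⟩ := ih M hMN hsfM hMdvd
  obtain ⟨u, v, huv⟩ := hcop
  have huv' : u * (q:ℤ) + v * (M:ℤ) = 1 := huv
  refine ⟨α₂*u*q + α₁*v*M, β₂*u*q + β₁*v*M, γ₂*u*q + γ₁*v*M, fun x y z h => ?_⟩
  have hNqM : (N:ℤ) = (q:ℤ) * (M:ℤ) := by exact_mod_cast congrArg (Nat.cast : ℕ → ℤ) hNM
  set L : ℤ := (α₂*u*q + α₁*v*M)*x + (β₂*u*q + β₁*v*M)*y + (γ₂*u*q + γ₁*v*M)*z with hL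
  have hqL : (q:ℤ) ∣ L := dvd_trans ⟨(M:ℤ), hNqM⟩ h
  have hML : (M:ℤ) ∣ L := dvd_trans ⟨(q:ℤ), by rw [hNqM]; ring⟩ h
  have hqQ : (q:ℤ) ∣ A*x^2+B*y^2+C*z^2 := by
    apply h₁ x y z
    have e : α₁*x+β₁*y+γ₁*z = L - (q:ℤ)*(u*((α₂-α₁)*x+(β₂-β₁)*y+(γ₂-γ₁)*z)) := by
      rw [hL]; linear_combination (-(α₁*x+β₁*y+γ₁*z))*huv'
    rw [e]
    exact dvd_sub hqL (dvd_mul_right _ _)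
  have hMQ : (M:ℤ) ∣ A*x^2+B*y^2+C*z^2 := by
    apply h₂ x y z
    have e : α₂*x+β₂*y+γ₂*z = L - (M:ℤ)*(v*((α₁-α₂)*x+(β₁-β₂)*y+(γ₁-γ₂)*z)) := by
      rw [hL]; linear_combination (-(α₂*x+β₂*y+γ₂*z))*huv'
    rw [e]
    exact dvd_sub hML (dvd_mul_right _ _)
  rw [hNqM]
  exact (IsCoprime.mul_dvd ⟨u, v, huv⟩ hqQ hMQ)


lemma nat_sf_not_square' {m : ℕ} (hm : Squarefree m) (h1 : m ≠ 1) (t : ℕ) : t * t ≠ m := by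
  intro h
  have hu : IsUnit t := hm t (h ▸ dvd_refl _)
  rw [Nat.isUnit_iff] at hu
  rw [hu] at h
  exact h1 h.symm

lemma legendre_box (A B C : ℤ) (hA : 0 < A) (hB : B < 0) (hC : C < 0)
    (sfBC : Squarefree (B*C)) (sfAC : Squarefree (A*C)) (sfAB : Squarefree (A*B))
    (hm1 : (B*C).natAbs ≠ 1) (hm2 : (A*C).natAbs ≠ 1) (hm3 : (A*B).natAbs ≠ 1)
    (sfN : Squarefree (A*B*C).natAbs)
    (hform : ∀ N : ℕ, Squarefree N → ((N:ℤ) ∣ A*B*C) → ∃ α β γ : ℤ, ∀ x y z : ℤ,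
      ((N:ℤ) ∣ α*x+β*y+γ*z) → ((N:ℤ) ∣ A*x^2+B*y^2+C*z^2)) :
    ∃ x y z : ℤ, ¬(x = 0 ∧ y = 0 ∧ z = 0) ∧ A*x^2 + B*y^2 + C*z^2 = 0 := by
  set a := A.natAbs with hadef
  set b := B.natAbs with hbdef
  set c := C.natAbs with hcdef
  have haZ : (a:ℤ) = A := Int.natAbs_of_nonneg hA.le
  have hbZ : (b:ℤ) = -B := by
    rw [hbdef, ← Int.natAbs_neg]; exact Int.natAbs_of_nonneg (by omega)
  have hcZ : (c:ℤ) = -C := by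
    rw [hcdef, ← Int.natAbs_neg]; exact Int.natAbs_of_nonneg (by omega)
  have ha0 : 0 < a := Int.natAbs_pos.mpr hA.ne'
  have hb0 : 0 < b := Int.natAbs_pos.mpr hB.ne
  have hc0 : 0 < c := Int.natAbs_pos.mpr hC.ne
  set m₁ := b*c with hm₁def
  set m₂ := a*c with hm₂def
  set m₃ := a*b with hm₃def
  have hm₁Z : (m₁:ℤ) = B*C := by push_cast [hm₁def]; rw [hbZ, hcZ]; ring
  have hm₂Z : (m₂:ℤ) = -(A*C) := by push_cast [hm₂def]; rw [haZ, hcZ]; ring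
  have hm₃Z : (m₃:ℤ) = -(A*B) := by push_cast [hm₃def]; rw [haZ, hbZ]; ring
  have sfm₁ : Squarefree m₁ := by
    rw [hm₁def, ← Int.natAbs_mul]; exact Int.squarefree_natAbs.mpr sfBC
  have sfm₂ : Squarefree m₂ := by
    have : Squarefree (A*C).natAbs := Int.squarefree_natAbs.mpr sfAC
    rwa [Int.natAbs_mul] at this
  have sfm₃ : Squarefree m₃ := by
    have : Squarefree (A*B).natAbs := Int.squarefree_natAbs.mpr sfAB
    rwa [Int.natAbs_mul] at this
  have hm₁1 : m₁ ≠ 1 := by rw [hm₁def]; rw [Int.natAbs_mul] at hm1; exact hm1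
  have hm₂1 : m₂ ≠ 1 := by rw [hm₂def]; rw [Int.natAbs_mul] at hm2; exact hm2
  have hm₃1 : m₃ ≠ 1 := by rw [hm₃def]; rw [Int.natAbs_mul] at hm3; exact hm3
  set N := a*b*c with hNdef
  have hN0 : N ≠ 0 := by positivity
  have hNnat : (A*B*C).natAbs = N := by
    rw [Int.natAbs_mul, Int.natAbs_mul]
  have hNZ : (N:ℤ) = A*B*C := by
    push_cast [hNdef]; rw [haZ, hbZ, hcZ]; ring
  obtain ⟨α, β, γ, hf⟩ := hform N (hNnat ▸ sfN) (hNZ ▸ dvd_refl _)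
  set s₁ := Nat.sqrt m₁
  set s₂ := Nat.sqrt m₂
  set s₃ := Nat.sqrt m₃
  haveI : NeZero N := ⟨hN0⟩
  set S : Finset (ℕ × ℕ × ℕ) :=
    (Finset.range (s₁+1)) ×ˢ ((Finset.range (s₂+1)) ×ˢ (Finset.range (s₃+1))) with hS
  have hcardS : S.card = (s₁+1)*((s₂+1)*(s₃+1)) := by
    simp [hS, Finset.card_product]
  have hsq : ∀ m : ℕ, Squarefree m → m ≠ 1 → Nat.sqrt m * Nat.sqrt m < m := by
    intro m hsf h1
    rcases lt_or_eq_of_le (Nat.sqrt_le m) with h | h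
    · exact h
    · exact absurd h (nat_sf_not_square' hsf h1 _)
  have h₁ : s₁*s₁ < m₁ := hsq _ sfm₁ hm₁1
  have h₂ : s₂*s₂ < m₂ := hsq _ sfm₂ hm₂1
  have h₃ : s₃*s₃ < m₃ := hsq _ sfm₃ hm₃1
  have hNcard : N < S.card := by
    rw [hcardS]
    have key : N*N < ((s₁+1)*((s₂+1)*(s₃+1))) * ((s₁+1)*((s₂+1)*(s₃+1))) := by
      have e : N*N = m₁*(m₂*m₃) := by rw [hNdef, hm₁def, hm₂def, hm₃def]; ring
      rw [e]
      have b₁ : m₁ < (s₁+1)*(s₁+1) := Nat.lt_succ_sqrt m₁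
      have b₂ : m₂ < (s₂+1)*(s₂+1) := Nat.lt_succ_sqrt m₂
      have b₃ : m₃ < (s₃+1)*(s₃+1) := Nat.lt_succ_sqrt m₃
      calc m₁*(m₂*m₃) < ((s₁+1)*(s₁+1)) * (((s₂+1)*(s₂+1)) * ((s₃+1)*(s₃+1))) := by
            apply Nat.mul_lt_mul_of_lt_of_le b₁ (Nat.mul_le_mul b₂.le b₃.le)
            positivity
        _ = ((s₁+1)*((s₂+1)*(s₃+1))) * ((s₁+1)*((s₂+1)*(s₃+1))) := by ring
    by_contra hcon
    push_neg at hcon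
    exact absurd (Nat.mul_le_mul hcon hcon) (not_le.mpr key)
  have hmap : ∀ tt ∈ S, ((α*tt.1 + β*tt.2.1 + γ*tt.2.2 : ℤ) : ZMod N) ∈ (Finset.univ : Finset (ZMod N)) :=
    fun tt _ => Finset.mem_univ _
  have hlt : (Finset.univ : Finset (ZMod N)).card < S.card := by
    rw [Finset.card_univ, ZMod.card N]; exact hNcard
  obtain ⟨t, htS, t', ht'S, hne, heq⟩ := Finset.exists_ne_map_eq_of_card_lt_of_maps_to hlt hmap
  simp only [hS, Finset.mem_product, Finset.mem_range, Nat.lt_succ_iff] at htS ht'S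
  set u : ℤ := (t.1 : ℤ) - t'.1 with hu
  set v : ℤ := (t.2.1 : ℤ) - t'.2.1 with hv
  set w : ℤ := (t.2.2 : ℤ) - t'.2.2 with hw
  have hdvdL : (N:ℤ) ∣ α*u+β*v+γ*w := by
    rw [← ZMod.intCast_zmod_eq_zero_iff_dvd]
    push_cast at heq ⊢
    rw [hu, hv, hw]
    push_cast
    linear_combination heq
  have hQ : (N:ℤ) ∣ A*u^2+B*v^2+C*w^2 := hf u v w hdvdL
  have hub : u^2 < B*C := by
    have h1 : t.1 ≤ s₁ := htS.1
    have h2 : t'.1 ≤ s₁ := ht'S.1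
    have hle : u ≤ (s₁:ℤ) := by rw [hu]; omega
    have hge : -(s₁:ℤ) ≤ u := by rw [hu]; omega
    have h5 : (s₁:ℤ)*s₁ < (m₁:ℤ) := by exact_mod_cast h₁
    have h6 : u^2 ≤ (s₁:ℤ)^2 := sq_le_sq' hge hle
    rw [← hm₁Z]
    have h7 : ((s₁:ℤ))^2 = (s₁:ℤ)*s₁ := sq (s₁:ℤ) ▸ by ring
    linarith
  have hvb : v^2 < -(A*C) := by
    have h1 : t.2.1 ≤ s₂ := htS.2.1
    have h2 : t'.2.1 ≤ s₂ := ht'S.2.1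
    have hle : v ≤ (s₂:ℤ) := by rw [hv]; omega
    have hge : -(s₂:ℤ) ≤ v := by rw [hv]; omega
    have h5 : (s₂:ℤ)*s₂ < (m₂:ℤ) := by exact_mod_cast h₂
    have h6 : v^2 ≤ (s₂:ℤ)^2 := sq_le_sq' hge hle
    rw [← hm₂Z]
    have h7 : ((s₂:ℤ))^2 = (s₂:ℤ)*s₂ := by ring
    linarith
  have hwb : w^2 < -(A*B) := by
    have h1 : t.2.2 ≤ s₃ := htS.2.2
    have h2 : t'.2.2 ≤ s₃ := ht'S.2.2
    have hle : w ≤ (s₃:ℤ) := by rw [hw]; omega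
    have hge : -(s₃:ℤ) ≤ w := by rw [hw]; omega
    have h5 : (s₃:ℤ)*s₃ < (m₃:ℤ) := by exact_mod_cast h₃
    have h6 : w^2 ≤ (s₃:ℤ)^2 := sq_le_sq' hge hle
    rw [← hm₃Z]
    have h7 : ((s₃:ℤ))^2 = (s₃:ℤ)*s₃ := by ring
    linarith
  obtain ⟨k, hk⟩ := hQ
  rw [hNZ] at hk
  have hABC : 0 < A*B*C := by
    have : (0:ℤ) < (N:ℤ) := by exact_mod_cast Nat.pos_of_ne_zero hN0
    rwa [hNZ] at this
  have hAu : A*u^2 < A*(B*C) := mul_lt_mul_of_pos_left hub hA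
  have hAu0 : 0 ≤ A*u^2 := mul_nonneg hA.le (sq_nonneg u)
  have hBv : B*v^2 ≤ 0 := mul_nonpos_of_nonpos_of_nonneg hB.le (sq_nonneg v)
  have hCw : C*w^2 ≤ 0 := mul_nonpos_of_nonpos_of_nonneg hC.le (sq_nonneg w)
  have hBv2 : -(A*B*C) < B*v^2 := by
    have h := mul_lt_mul_of_neg_left hvb hB
    have e : B*(-(A*C)) = -(A*B*C) := by ring
    linarith
  have hCw2 : -(A*B*C) < C*w^2 := by
    have h := mul_lt_mul_of_neg_left hwb hC
    have e : C*(-(A*B)) = -(A*B*C) := by ring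
    linarith
  have hk1 : k < 1 := by
    have hlt : A*B*C*k < A*B*C*1 := by linarith
    exact (mul_lt_mul_iff_right₀ hABC).mp hlt
  have hk2 : -2 < k := by
    have hlt : A*B*C*(-2) < A*B*C*k := by linarith
    exact (mul_lt_mul_iff_right₀ hABC).mp hlt
  interval_cases k
  · -- k = -1
    have hV : A*u^2 + B*v^2 + C*w^2 + A*B*C = 0 := by rw [hk]; ring
    refine ⟨u*w + B*v, v*w - A*u, w^2 + A*B, fun hcon => ?_, by linear_combination (w^2 + A*B) * hV⟩
    have hZ : w^2 + A*B = 0 := hcon.2.2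
    have : (w.natAbs : ℤ) * w.natAbs = (m₃:ℤ) := by
      rw [hm₃Z]
      have : (w.natAbs : ℤ) * w.natAbs = w^2 := by
        rw [Int.natAbs_mul_self']; ring
      rw [this]; linarith
    exact nat_sf_not_square' sfm₃ hm₃1 w.natAbs (by exact_mod_cast this)
  · -- k = 0
    refine ⟨u, v, w, fun hcon => hne ?_, by rw [hk]; ring⟩
    obtain ⟨h1, h2, h3⟩ := hcon
    have e1 : t.1 = t'.1 := by rw [hu] at h1; omega
    have e2 : t.2.1 = t'.2.1 := by rw [hv] at h2; omega
    have e3 : t.2.2 = t'.2.2 := by rw [hw] at h3; omega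
    exact Prod.ext e1 (Prod.ext e2 e3)

lemma legendre_main (A B C : ℤ) (hA : 0 < A) (hB : B < 0) (hC : C < 0)
    (sfA : Squarefree A) (sfB : Squarefree B) (sfC : Squarefree C)
    (cAB : IsCoprime A B) (cAC : IsCoprime A C) (cBC : IsCoprime B C)
    (hypA : ∀ q : ℕ, q.Prime → q ≠ 2 → (q:ℤ) ∣ A → ∃ r : ℤ, (q:ℤ) ∣ r^2 + B*C)
    (hypB : ∀ q : ℕ, q.Prime → q ≠ 2 → (q:ℤ) ∣ B → ∃ r : ℤ, (q:ℤ) ∣ r^2 + A*C)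
    (hypC : ∀ q : ℕ, q.Prime → q ≠ 2 → (q:ℤ) ∣ C → ∃ r : ℤ, (q:ℤ) ∣ r^2 + A*B)
    (hform : ∀ N : ℕ, Squarefree N → ((N:ℤ) ∣ A*B*C) → ∃ α β γ : ℤ, ∀ x y z : ℤ,
      ((N:ℤ) ∣ α*x+β*y+γ*z) → ((N:ℤ) ∣ A*x^2+B*y^2+C*z^2)) :
    ∃ x y z : ℤ, ¬(x = 0 ∧ y = 0 ∧ z = 0) ∧ A*x^2 + B*y^2 + C*z^2 = 0 := by
  have sfAB : Squarefree (A*B) := squarefree_mul_iff.mpr ⟨cAB.isRelPrime, sfA, sfB⟩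
  have sfAC : Squarefree (A*C) := squarefree_mul_iff.mpr ⟨cAC.isRelPrime, sfA, sfC⟩
  have sfBC : Squarefree (B*C) := squarefree_mul_iff.mpr ⟨cBC.isRelPrime, sfB, sfC⟩
  have sfABC : Squarefree (A*B*C) :=
    squarefree_mul_iff.mpr ⟨(cAC.mul_left cBC).isRelPrime, sfAB, sfC⟩
  by_cases h3 : (A*B).natAbs = 1
  · -- A = 1, B = -1
    have hABneg : A*B < 0 := mul_neg_of_pos_of_neg hA hB
    have hABm1 : A*B = -1 := by
      rcases Int.natAbs_eq (A*B) with h | h <;> rw [h3] at h <;> omega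
    have hA1 : A = 1 := by
      have h1 : A * (-B) = 1 := by linear_combination -hABm1
      exact Int.eq_one_of_mul_eq_one_right hA.le h1
    have hB1 : B = -1 := by rw [hA1] at hABm1; linarith
    exact ⟨1, 1, 0, by simp, by rw [hA1, hB1]; ring⟩
  by_cases h2 : (A*C).natAbs = 1
  · have hACneg : A*C < 0 := mul_neg_of_pos_of_neg hA hC
    have hACm1 : A*C = -1 := by
      rcases Int.natAbs_eq (A*C) with h | h <;> rw [h2] at h <;> omega
    have hA1 : A = 1 := by
      have h1 : A * (-C) = 1 := by linear_combination -hACm1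
      exact Int.eq_one_of_mul_eq_one_right hA.le h1
    have hC1 : C = -1 := by rw [hA1] at hACm1; linarith
    exact ⟨1, 0, 1, by simp, by rw [hA1, hC1]; ring⟩
  by_cases h1 : (B*C).natAbs = 1
  · -- B = C = -1 and A is a sum of two squares
    have hBCpos : 0 < B*C := mul_pos_of_neg_of_neg hB hC
    have hBC1 : B*C = 1 := by
      rcases Int.natAbs_eq (B*C) with h | h <;> rw [h1] at h <;> omega
    have hB1 : B = -1 := by
      have h1' : (-B) * (-C) = 1 := by linear_combination hBC1
      have := Int.eq_one_of_mul_eq_one_right (by omega : (0:ℤ) ≤ -B) h1'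
      omega
    have hC1 : C = -1 := by rw [hB1] at hBC1; linarith
    set n := A.toNat with hndef
    have hn : (n:ℤ) = A := Int.toNat_of_nonneg hA.le
    have hsum : ∃ x y : ℕ, n = x^2 + y^2 := by
      rw [Nat.eq_sq_add_sq_iff]
      intro q hq hq4
      by_cases hdq : q ∣ n
      · exfalso
        have hq2 : q ≠ 2 := by omega
        have hdq' : (q:ℤ) ∣ A := by rw [← hn]; exact_mod_cast hdq
        obtain ⟨r, hr⟩ := hypA q (Nat.prime_of_mem_primeFactors hq) hq2 hdq'
        rw [hBC1] at hr
        haveI : Fact q.Prime := ⟨Nat.prime_of_mem_primeFactors hq⟩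
        have hzm : ((r:ZMod q))^2 = -1 := by
          have h0 := (ZMod.intCast_zmod_eq_zero_iff_dvd _ q).mpr hr
          push_cast at h0
          linear_combination h0
        exact ZMod.mod_four_ne_three_of_sq_eq_neg_one hzm hq4
      · rw [padicValNat.eq_zero_of_not_dvd hdq]
        exact Even.zero
    obtain ⟨x, y, hxy⟩ := hsum
    refine ⟨1, (x:ℤ), (y:ℤ), by simp, ?_⟩
    have hxyz : (n:ℤ) = (x:ℤ)^2 + (y:ℤ)^2 := by exact_mod_cast hxy
    rw [hB1, hC1]
    rw [hn] at hxyz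
    linarith [hxyz]
  · exact legendre_box A B C hA hB hC sfBC sfAC sfAB h1 h2 h3
      (Int.squarefree_natAbs.mpr sfABC) hform

lemma sf_neg {a : ℤ} (h : Squarefree a) : Squarefree (-a) := by
  rw [← Int.squarefree_natAbs] at h ⊢
  rwa [Int.natAbs_neg]

lemma legendre_full (A B C : ℤ) (hA : 0 < A) (hB0 : B ≠ 0) (hC0 : C ≠ 0)
    (hsign : B < 0 ∨ C < 0)
    (sfA : Squarefree A) (sfB : Squarefree B) (sfC : Squarefree C)
    (cAB : IsCoprime A B) (cAC : IsCoprime A C) (cBC : IsCoprime B C)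
    (hypA : ∀ q : ℕ, q.Prime → q ≠ 2 → (q:ℤ) ∣ A → ∃ r : ℤ, (q:ℤ) ∣ r^2 + B*C)
    (hypB : ∀ q : ℕ, q.Prime → q ≠ 2 → (q:ℤ) ∣ B → ∃ r : ℤ, (q:ℤ) ∣ r^2 + A*C)
    (hypC : ∀ q : ℕ, q.Prime → q ≠ 2 → (q:ℤ) ∣ C → ∃ r : ℤ, (q:ℤ) ∣ r^2 + A*B) :
    ∃ x y z : ℤ, ¬(x = 0 ∧ y = 0 ∧ z = 0) ∧ A*x^2 + B*y^2 + C*z^2 = 0 := by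
  rcases lt_or_gt_of_ne hB0 with hB | hB
  · rcases lt_or_gt_of_ne hC0 with hC | hC
    · -- B < 0, C < 0
      exact legendre_main A B C hA hB hC sfA sfB sfC cAB cAC cBC hypA hypB hypC
        (lf_of_squarefree A B C cAB cAC cBC hypA hypB hypC)
    · -- B < 0, C > 0 : use (-B, -A, -C)
      obtain ⟨x, y, z, hnt, hsol⟩ :=
        legendre_main (-B) (-A) (-C) (by omega) (by omega) (by omega)
          (sf_neg sfB) (sf_neg sfA) (sf_neg sfC)
          (cAB.symm.neg_left.neg_right) (cBC.neg_left.neg_right) (cAC.neg_left.neg_right)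
          (fun q hq hq2 hd => by
            obtain ⟨r, hr⟩ := hypB q hq hq2 ((dvd_neg).mp hd)
            exact ⟨r, by convert hr using 1; ring⟩)
          (fun q hq hq2 hd => by
            obtain ⟨r, hr⟩ := hypA q hq hq2 ((dvd_neg).mp hd)
            exact ⟨r, by convert hr using 1; ring⟩)
          (fun q hq hq2 hd => by
            obtain ⟨r, hr⟩ := hypC q hq hq2 ((dvd_neg).mp hd)
            exact ⟨r, by convert hr using 1; ring⟩)
          (by
            intro N hsf hdvd
            obtain ⟨α, β, γ, hf⟩ := lf_of_squarefree A B C cAB cAC cBC hypA hypB hypC N hsf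
              (by rw [show (-B)*(-A)*(-C) = -(A*B*C) by ring, dvd_neg] at hdvd; exact hdvd)
            refine ⟨β, α, γ, fun x y z h => ?_⟩
            have := hf y x z (by rw [show α*y+β*x+γ*z = β*x+α*y+γ*z by ring]; exact h)
            rw [show (-B)*x^2+(-A)*y^2+(-C)*z^2 = -(A*y^2+B*x^2+C*z^2) by ring, dvd_neg]
            exact this)
      refine ⟨y, x, z, fun hcon => hnt ⟨hcon.2.1, hcon.1, hcon.2.2⟩, by linarith [hsol]⟩
  · -- B > 0, so C < 0 : use (-C, -B, -A)
    have hC : C < 0 := by rcases hsign with h | h; omega; exact h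
    obtain ⟨x, y, z, hnt, hsol⟩ :=
      legendre_main (-C) (-B) (-A) (by omega) (by omega) (by omega)
        (sf_neg sfC) (sf_neg sfB) (sf_neg sfA)
        (cBC.symm.neg_left.neg_right) (cAC.symm.neg_left.neg_right) (cAB.symm.neg_left.neg_right)
        (fun q hq hq2 hd => by
          obtain ⟨r, hr⟩ := hypC q hq hq2 ((dvd_neg).mp hd)
          exact ⟨r, by convert hr using 1; ring⟩)
        (fun q hq hq2 hd => by
          obtain ⟨r, hr⟩ := hypB q hq hq2 ((dvd_neg).mp hd)
          exact ⟨r, by convert hr using 1; ring⟩)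
        (fun q hq hq2 hd => by
          obtain ⟨r, hr⟩ := hypA q hq hq2 ((dvd_neg).mp hd)
          exact ⟨r, by convert hr using 1; ring⟩)
        (by
          intro N hsf hdvd
          obtain ⟨α, β, γ, hf⟩ := lf_of_squarefree A B C cAB cAC cBC hypA hypB hypC N hsf
            (by rw [show (-C)*(-B)*(-A) = -(A*B*C) by ring, dvd_neg] at hdvd; exact hdvd)
          refine ⟨γ, β, α, fun x y z h => ?_⟩
          have := hf z y x (by rw [show α*z+β*y+γ*x = γ*x+β*y+α*z by ring]; exact h)
          rw [show (-C)*x^2+(-B)*y^2+(-A)*z^2 = -(A*z^2+B*y^2+C*x^2) by ring, dvd_neg]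
          exact this)
    refine ⟨z, y, x, fun hcon => hnt ⟨hcon.2.2, hcon.2.1, hcon.1⟩, by linarith [hsol]⟩


lemma padicValInt_prime_pow {p : ℕ} [hp : Fact p.Prime] (k : ℕ) :
    padicValInt p ((p:ℤ)^k) = k := by
  unfold padicValInt
  rw [Int.natAbs_pow, Int.natAbs_natCast]
  exact padicValNat.prime_pow k

lemma padicValInt_eq_of {p : ℕ} [hp : Fact p.Prime] {m u : ℤ} {k : ℕ} (hu : ¬ (p:ℤ) ∣ u)
    (hm : m = (p:ℤ)^k * u) : padicValInt p m = k := by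
  have hp0 : (p:ℤ) ≠ 0 := by exact_mod_cast hp.out.ne_zero
  have hu0 : u ≠ 0 := fun h => hu (h ▸ dvd_zero _)
  rw [hm, padicValInt.mul (pow_ne_zero _ hp0) hu0, padicValInt_prime_pow,
    padicValInt.eq_zero_of_not_dvd hu]
  omega

lemma div_pow_val {p : ℕ} [hp : Fact p.Prime] {m u : ℤ} {k : ℕ}
    (hm : m = (p:ℤ)^k * u) : m / (p:ℤ)^k = u := by
  have hp0 : ((p:ℤ))^k ≠ 0 := pow_ne_zero _ (by exact_mod_cast hp.out.ne_zero)
  rw [hm]; exact Int.mul_ediv_cancel_left _ hp0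

lemma even_val_nonres {p : ℕ} [hp : Fact p.Prime] {D : ℤ} (hD : legendreSym p D = -1) :
    ∀ n : ℕ, ∀ x y : ℤ, x.natAbs + y.natAbs ≤ n → x^2 - D*y^2 ≠ 0 →
      Even (padicValInt p (x^2 - D*y^2)) := by
  intro n
  induction n using Nat.strong_induction_on with
  | _ n ih =>
  intro x y hxy hne
  by_cases hdvd : (p:ℤ) ∣ (x^2 - D*y^2)
  · obtain ⟨hx, hy⟩ := legendreSym.prime_dvd_of_eq_neg_one hD hdvd
    obtain ⟨x₁, rfl⟩ := hx
    obtain ⟨y₁, rfl⟩ := hy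
    have hp2 : 2 ≤ p := hp.out.two_le
    have e : ((p:ℤ)*x₁)^2 - D*((p:ℤ)*y₁)^2 = (p:ℤ)^2 * (x₁^2 - D*y₁^2) := by ring
    have hne' : x₁^2 - D*y₁^2 ≠ 0 := fun h => hne (by rw [e, h, mul_zero])
    have hp0 : (p:ℤ) ≠ 0 := by exact_mod_cast hp.out.ne_zero
    have hval : padicValInt p (((p:ℤ)*x₁)^2 - D*((p:ℤ)*y₁)^2)
        = 2 + padicValInt p (x₁^2 - D*y₁^2) := by
      rw [e, padicValInt.mul (pow_ne_zero _ hp0) hne', padicValInt_prime_pow]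
    rw [hval]
    have hs1 : 1 ≤ x₁.natAbs + y₁.natAbs := by
      by_contra hcon
      push_neg at hcon
      have hx0 : x₁ = 0 := Int.natAbs_eq_zero.mp (by omega)
      have hy0 : y₁ = 0 := Int.natAbs_eq_zero.mp (by omega)
      exact hne' (by rw [hx0, hy0]; ring)
    have hlt : x₁.natAbs + y₁.natAbs < n := by
      have h1 : ((p:ℤ)*x₁).natAbs = p * x₁.natAbs := by
        rw [Int.natAbs_mul, Int.natAbs_natCast]
      have h2 : ((p:ℤ)*y₁).natAbs = p * y₁.natAbs := by
        rw [Int.natAbs_mul, Int.natAbs_natCast]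
      rw [h1, h2] at hxy
      have h3 : 2*(x₁.natAbs + y₁.natAbs) ≤ p*(x₁.natAbs + y₁.natAbs) :=
        Nat.mul_le_mul_right _ hp2
      have h4 : p*(x₁.natAbs + y₁.natAbs) = p*x₁.natAbs + p*y₁.natAbs := Nat.mul_add p _ _
      omega
    obtain ⟨r, hr⟩ := ih _ hlt x₁ y₁ le_rfl hne'
    exact ⟨r+1, by omega⟩
  · rw [padicValInt.eq_zero_of_not_dvd hdvd]
    exact Even.zero

lemma leg_congr {p : ℕ} [hp : Fact p.Prime] {m m' : ℤ} (h : (p:ℤ) ∣ m - m') :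
    legendreSym p m = legendreSym p m' := by
  rw [legendreSym.mod p m, legendreSym.mod p m']
  congr 1
  have hmm : m' ≡ m [ZMOD ((p:ℕ):ℤ)] := Int.modEq_iff_dvd.mpr (by simpa using h)
  exact (Int.ModEq.symm hmm)

lemma val_unit_ramified {p : ℕ} [hp : Fact p.Prime] {D D₁ : ℤ}
    (hDp : D = (p:ℤ) * D₁) (hD₁ : ¬ (p:ℤ) ∣ D₁) :
    ∀ n : ℕ, ∀ x y : ℤ, x.natAbs + y.natAbs ≤ n → x^2 - D*y^2 ≠ 0 →
      ∃ (k : ℕ) (u : ℤ), x^2 - D*y^2 = (p:ℤ)^k * u ∧ ¬ (p:ℤ) ∣ u ∧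
        (Even k → legendreSym p u = 1) ∧ (¬ Even k → legendreSym p u = legendreSym p (-D₁)) := by
  intro n
  induction n using Nat.strong_induction_on with
  | _ n ih =>
  intro x y hxy hne
  have hp0 : (p:ℤ) ≠ 0 := by exact_mod_cast hp.out.ne_zero
  have hpp : Prime (p:ℤ) := Nat.prime_iff_prime_int.mp hp.out
  by_cases hx : (p:ℤ) ∣ x
  · obtain ⟨x₁, rfl⟩ := hx
    by_cases hy : (p:ℤ) ∣ y
    · -- p ∣ x, p ∣ y : recurse
      obtain ⟨y₁, rfl⟩ := hy
      have hp2 : 2 ≤ p := hp.out.two_le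
      have e : ((p:ℤ)*x₁)^2 - D*((p:ℤ)*y₁)^2 = (p:ℤ)^2 * (x₁^2 - D*y₁^2) := by ring
      have hne' : x₁^2 - D*y₁^2 ≠ 0 := fun h => hne (by rw [e, h, mul_zero])
      have hs1 : 1 ≤ x₁.natAbs + y₁.natAbs := by
        by_contra hcon
        push_neg at hcon
        have hx0 : x₁ = 0 := Int.natAbs_eq_zero.mp (by omega)
        have hy0 : y₁ = 0 := Int.natAbs_eq_zero.mp (by omega)
        exact hne' (by rw [hx0, hy0]; ring)
      have hlt : x₁.natAbs + y₁.natAbs < n := by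
        have h1 : ((p:ℤ)*x₁).natAbs = p * x₁.natAbs := by
          rw [Int.natAbs_mul, Int.natAbs_natCast]
        have h2 : ((p:ℤ)*y₁).natAbs = p * y₁.natAbs := by
          rw [Int.natAbs_mul, Int.natAbs_natCast]
        rw [h1, h2] at hxy
        have h3 : 2*(x₁.natAbs + y₁.natAbs) ≤ p*(x₁.natAbs + y₁.natAbs) :=
          Nat.mul_le_mul_right _ hp2
        have h4 : p*(x₁.natAbs + y₁.natAbs) = p*x₁.natAbs + p*y₁.natAbs := Nat.mul_add p _ _
        omega
      obtain ⟨k, u, hku, hu, heven, hodd⟩ := ih _ hlt x₁ y₁ le_rfl hne'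
      refine ⟨k+2, u, ?_, hu, ?_, ?_⟩
      · rw [e, hku]; ring
      · intro h; exact heven (by simpa [parity_simps] using h)
      · intro h; exact hodd (fun h' => h (by simpa [parity_simps] using h'))
    · -- p ∣ x, p ∤ y : k = 1
      set M : ℤ := (p:ℤ)*x₁^2 - D₁*y^2 with hM
      have e : ((p:ℤ)*x₁)^2 - D*y^2 = (p:ℤ) * M := by rw [hM, hDp]; ring
      have hpM : ¬ (p:ℤ) ∣ M := by
        intro hd
        have : (p:ℤ) ∣ D₁*y^2 := by
          have : D₁*y^2 = (p:ℤ)*x₁^2 - M := by rw [hM]; ring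
          rw [this]
          exact dvd_sub (Dvd.intro _ rfl) hd
        rcases hpp.dvd_mul.mp this with h | h
        · exact hD₁ h
        · exact hy (hpp.dvd_of_dvd_pow h)
      refine ⟨1, M, by rw [e]; ring, hpM, ?_, ?_⟩
      · intro h; simp at h
      · intro _
        have hcong : legendreSym p M = legendreSym p ((-D₁)*y^2) := by
          apply leg_congr
          refine ⟨x₁^2, by rw [hM]; ring⟩
        rw [hcong]
        have hy' : ((y:ℤ) : ZMod p) ≠ 0 := by
          rw [Ne, ZMod.intCast_zmod_eq_zero_iff_dvd]
          exact hy
        rw [legendreSym.mul, legendreSym.sq_one' p hy', mul_one]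
  · -- p ∤ x : k = 0
    have hpN : ¬ (p:ℤ) ∣ (x^2 - D*y^2) := by
      intro hd
      apply hx
      apply hpp.dvd_of_dvd_pow (n := 2)
      have : x^2 = (x^2 - D*y^2) + (p:ℤ)*(D₁*y^2) := by rw [hDp]; ring
      rw [this]
      exact dvd_add hd (Dvd.intro _ rfl)
    refine ⟨0, x^2 - D*y^2, by ring, hpN, ?_, ?_⟩
    · intro _
      have hcong : legendreSym p (x^2 - D*y^2) = legendreSym p (x^2) := by
        apply leg_congr
        refine ⟨-(D₁*y^2), by rw [hDp]; ring⟩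
      have hx' : ((x:ℤ) : ZMod p) ≠ 0 := by
        rw [Ne, ZMod.intCast_zmod_eq_zero_iff_dvd]
        exact hx
      rw [hcong, legendreSym.sq_one' p hx']
    · intro h; simp at h



lemma exists_val_decomp {p : ℕ} [hp : Fact p.Prime] {a : ℤ} (ha : a ≠ 0) :
    ∃ u : ℤ, a = (p:ℤ)^(padicValInt p a) * u ∧ ¬ (p:ℤ) ∣ u := by
  obtain ⟨u, hu⟩ := padicValInt_dvd (p := p) a
  refine ⟨u, hu, fun hdvd => ?_⟩
  obtain ⟨w, hw⟩ := hdvd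
  have hd : (p:ℤ)^(padicValInt p a + 1) ∣ a := by
    refine ⟨w, ?_⟩
    conv_lhs => rw [hu, hw]
    ring
  rw [padicValInt_dvd_iff] at hd
  rcases hd with h | h
  · exact ha h
  · omega

lemma exists_root_of_leg_one {q : ℕ} [hq : Fact q.Prime] {m : ℤ}
    (hm : legendreSym q (-m) = 1) : ∃ r : ℤ, (q:ℤ) ∣ r^2 + m := by
  have hns : ((-m : ℤ) : ZMod q) ≠ 0 := by
    intro h0
    rw [(legendreSym.eq_zero_iff q (-m)).mpr h0] at hm
    norm_num at hm
  obtain ⟨c, hc⟩ := (legendreSym.eq_one_iff q hns).mp hm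
  obtain ⟨r, hr⟩ := ZMod.intCast_surjective (n := q) c
  refine ⟨r, ?_⟩
  rw [← ZMod.intCast_zmod_eq_zero_iff_dvd]
  push_cast at hc ⊢
  rw [← hr] at hc
  linear_combination -hc

lemma leg_unit_sq {q : ℕ} [hq : Fact q.Prime] {u₁ u₂ : ℤ} (h2 : ¬ (q:ℤ) ∣ u₂) :
    legendreSym q (u₁ * u₂^2) = legendreSym q u₁ := by
  have h2' : ((u₂:ℤ) : ZMod q) ≠ 0 := by
    rw [Ne, ZMod.intCast_zmod_eq_zero_iff_dvd]; exact h2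
  rw [legendreSym.mul, legendreSym.sq_one' q h2', mul_one]

lemma leg_ne_zero {q : ℕ} [hq : Fact q.Prime] {m : ℤ} (h : ¬ (q:ℤ) ∣ m) :
    legendreSym q m = 1 ∨ legendreSym q m = -1 := by
  have : ((m:ℤ) : ZMod q) ≠ 0 := by
    rw [Ne, ZMod.intCast_zmod_eq_zero_iff_dvd]; exact h
  exact legendreSym.eq_one_or_neg_one q this

-- decomposition of a ≠ 0 into square * squarefree over ℤ
lemma int_sq_mul_squarefree (a : ℤ) (ha : a ≠ 0) :
    ∃ e a₀ : ℤ, a = e^2 * a₀ ∧ Squarefree a₀ ∧ e ≠ 0 ∧ a₀ ≠ 0 ∧ (0 < a → 0 < a₀) := by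
  obtain ⟨a₀n, bn, hab, hsf⟩ := Nat.sq_mul_squarefree a.natAbs
  have hna : a.natAbs ≠ 0 := Int.natAbs_ne_zero.mpr ha
  have hb0 : bn ≠ 0 := by rintro rfl; simp at hab; omega
  have ha0n : a₀n ≠ 0 := by rintro rfl; simp at hab; omega
  have hsgn : a.sign = 1 ∨ a.sign = -1 := by
    rcases lt_or_gt_of_ne ha with h | h
    · right; rwa [Int.sign_eq_neg_one_iff_neg]
    · left; rwa [Int.sign_eq_one_iff_pos]
  refine ⟨(bn:ℤ), (Int.sign a) * a₀n, ?_, ?_, by exact_mod_cast hb0, ?_, ?_⟩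
  · have h1 : ((bn:ℤ))^2 * ((Int.sign a) * a₀n) = (Int.sign a) * ((bn^2 * a₀n : ℕ) : ℤ) := by
      push_cast; ring
    rw [h1, hab]
    exact (Int.sign_mul_natAbs a).symm
  · rcases hsgn with h | h <;> rw [h]
    · rw [one_mul, ← Int.squarefree_natAbs, Int.natAbs_natCast]
      exact hsf
    · rw [neg_one_mul, ← Int.squarefree_natAbs, Int.natAbs_neg, Int.natAbs_natCast]
      exact hsf
  · rcases hsgn with h | h <;> rw [h] <;> simp [ha0n]
  · intro hapos
    rw [Int.sign_eq_one_iff_pos.mpr hapos, one_mul]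
    exact_mod_cast Nat.pos_of_ne_zero ha0n

theorem statement6 (D : ℤ) (hDsf : Squarefree D) (hD1 : D ≠ 1)
    (a : ℤ) (ha : a ≠ 0) :
    (∃ x₀ x₁ x₂ : ℚ, ¬ (x₀ = 0 ∧ x₁ = 0 ∧ x₂ = 0) ∧
        x₀ ^ 2 - (D : ℚ) * x₁ ^ 2 = (a : ℚ) * x₂ ^ 2) ↔
      ((D < 0 → 0 < a) ∧
      (∀ p : ℕ, p.Prime → ¬ ((p : ℤ) ∣ 2 * D) → legSym p D = -1 →
        2 ∣ padicValInt p a) ∧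
      (∀ p : ℕ, p.Prime → p ≠ 2 → (p : ℤ) ∣ D → 2 ∣ padicValInt p a →
        legSym p (a / (p : ℤ) ^ padicValInt p a) = 1) ∧
      (∀ p : ℕ, p.Prime → p ≠ 2 → (p : ℤ) ∣ D → ¬ 2 ∣ padicValInt p a →
        legSym p (a / (p : ℤ) ^ padicValInt p a) = legSym p (-D / (p : ℤ))) ∧
      (∃ x₀ x₁ x₂ : ℚ_[2], ¬ (x₀ = 0 ∧ x₁ = 0 ∧ x₂ = 0) ∧
        x₀ ^ 2 - (D : ℚ_[2]) * x₁ ^ 2 = (a : ℚ_[2]) * x₂ ^ 2)) := by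
  constructor
  · rintro ⟨x₀, x₁, x₂, hnt, heq⟩
    have hrs : ∃ r s : ℚ, (a:ℚ) = r^2 - D*s^2 := by
      by_cases hx2 : x₂ = 0
      · exfalso
        rw [hx2] at heq
        have hx1 : x₁ ≠ 0 := by
          rintro rfl
          apply hnt
          refine ⟨?_, rfl, hx2⟩
          have : x₀^2 = 0 := by linear_combination heq
          exact pow_eq_zero_iff (n := 2) (by norm_num) |>.mp this
        exact rat_not_square hDsf hD1 (x₀/x₁) (by field_simp; linear_combination heq)
      · exact ⟨x₀/x₂, x₁/x₂, by field_simp; linear_combination -heq⟩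
    obtain ⟨r, s, hrs⟩ := hrs
    obtain ⟨x, y, d, hd0, hint⟩ : ∃ x y d : ℤ, d ≠ 0 ∧ a*d^2 = x^2 - D*y^2 := by
      refine ⟨r.num * s.den, s.num * r.den, (r.den : ℤ) * (s.den : ℤ), ?_, ?_⟩
      · exact mul_ne_zero (Int.natCast_ne_zero.mpr r.den_nz) (Int.natCast_ne_zero.mpr s.den_nz)
      · have hrden : ((r.den:ℚ)) ≠ 0 := by exact_mod_cast r.den_nz
        have hsden : ((s.den:ℚ)) ≠ 0 := by exact_mod_cast s.den_nz
        have h1 : (a:ℚ) * ((r.den:ℚ)*(s.den:ℚ))^2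
            = ((r.num:ℚ)*(s.den:ℚ))^2 - D*((s.num:ℚ)*(r.den:ℚ))^2 := by
          rw [← Rat.num_div_den r, ← Rat.num_div_den s] at hrs
          field_simp at hrs
          linear_combination hrs
        exact_mod_cast h1
    have hne : x^2 - D*y^2 ≠ 0 := by
      rw [← hint]; exact mul_ne_zero ha (pow_ne_zero _ hd0)
    refine ⟨?_, ?_, ?_, ?_, ?_⟩
    · -- real condition
      intro hD0
      have hDq : (D:ℚ) < 0 := by exact_mod_cast hD0
      have h0 : (0:ℚ) ≤ (a:ℚ) := by rw [hrs]; nlinarith [sq_nonneg r, sq_nonneg s]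
      have h0' : (0:ℤ) ≤ a := by exact_mod_cast h0
      omega
    · -- condition (2)
      intro p hp hp2D hlegs
      haveI : Fact p.Prime := ⟨hp⟩
      have hleg : legendreSym p D = -1 := by
        rw [legSym, dif_pos hp] at hlegs; exact hlegs
      have hev : Even (padicValInt p (a*d^2)) := by
        rw [hint]; exact even_val_nonres hleg _ x y le_rfl hne
      have hd2 : d^2 ≠ 0 := pow_ne_zero _ hd0
      rw [padicValInt.mul ha hd2] at hev
      have hvd2 : padicValInt p (d^2) = 2 * padicValInt p d := by
        rw [sq, padicValInt.mul hd0 hd0]; ring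
      rw [hvd2] at hev
      obtain ⟨t, ht⟩ := hev
      omega
    · -- condition (3)
      intro p hp hp2 hpD hvae
      haveI : Fact p.Prime := ⟨hp⟩
      have hpp : Prime (p:ℤ) := Nat.prime_iff_prime_int.mp hp
      obtain ⟨D₁, hD₁eq⟩ := hpD
      have hpD₁ : ¬ (p:ℤ) ∣ D₁ := by
        intro hd
        obtain ⟨t, ht⟩ := hd
        exact hpp.not_unit (hDsf _ ⟨t, by rw [hD₁eq, ht]; ring⟩)
      obtain ⟨k, u, hku, hu, heven, _⟩ := val_unit_ramified hD₁eq hpD₁ _ x y le_rfl hne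
      have hkval : padicValInt p (a*d^2) = k := padicValInt_eq_of hu (hint.trans hku)
      obtain ⟨u₁, hu₁, hpu₁⟩ := exists_val_decomp (p := p) ha
      obtain ⟨u₂, hu₂, hpu₂⟩ := exists_val_decomp (p := p) hd0
      have hsplit : a*d^2 = (p:ℤ)^(padicValInt p a + 2*padicValInt p d) * (u₁ * u₂^2) := by
        conv_lhs => rw [hu₁, hu₂]
        ring
      have hpu : ¬ (p:ℤ) ∣ u₁*u₂^2 := by
        intro hd
        rcases hpp.dvd_mul.mp hd with h | h
        · exact hpu₁ h
        · exact hpu₂ (hpp.dvd_of_dvd_pow h)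
      have hk2 : k = padicValInt p a + 2*padicValInt p d := by
        rw [← hkval]; exact padicValInt_eq_of hpu hsplit
      have huu : u = u₁ * u₂^2 := by
        have h1 : (p:ℤ)^k * u = (p:ℤ)^k * (u₁*u₂^2) := by
          rw [← hku, ← hint, hsplit, hk2]
        exact mul_left_cancel₀ (pow_ne_zero _ (by exact_mod_cast hp.ne_zero)) h1
      have hlegu : legendreSym p u = legendreSym p u₁ := by
        rw [huu]; exact leg_unit_sq hpu₂
      have hdiv : a / (p:ℤ)^(padicValInt p a) = u₁ := div_pow_val hu₁
      rw [legSym, dif_pos hp, hdiv]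
      rw [← hlegu]
      apply heven
      obtain ⟨t, ht⟩ := hvae
      exact ⟨t + padicValInt p d, by omega⟩
    · -- condition (4)
      intro p hp hp2 hpD hvao
      haveI : Fact p.Prime := ⟨hp⟩
      have hpp : Prime (p:ℤ) := Nat.prime_iff_prime_int.mp hp
      obtain ⟨D₁, hD₁eq⟩ := hpD
      have hpD₁ : ¬ (p:ℤ) ∣ D₁ := by
        intro hd
        obtain ⟨t, ht⟩ := hd
        exact hpp.not_unit (hDsf _ ⟨t, by rw [hD₁eq, ht]; ring⟩)
      obtain ⟨k, u, hku, hu, _, hodd⟩ := val_unit_ramified hD₁eq hpD₁ _ x y le_rfl hne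
      have hkval : padicValInt p (a*d^2) = k := padicValInt_eq_of hu (hint.trans hku)
      obtain ⟨u₁, hu₁, hpu₁⟩ := exists_val_decomp (p := p) ha
      obtain ⟨u₂, hu₂, hpu₂⟩ := exists_val_decomp (p := p) hd0
      have hsplit : a*d^2 = (p:ℤ)^(padicValInt p a + 2*padicValInt p d) * (u₁ * u₂^2) := by
        conv_lhs => rw [hu₁, hu₂]
        ring
      have hpu : ¬ (p:ℤ) ∣ u₁*u₂^2 := by
        intro hd
        rcases hpp.dvd_mul.mp hd with h | h
        · exact hpu₁ h
        · exact hpu₂ (hpp.dvd_of_dvd_pow h)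
      have hk2 : k = padicValInt p a + 2*padicValInt p d := by
        rw [← hkval]; exact padicValInt_eq_of hpu hsplit
      have huu : u = u₁ * u₂^2 := by
        have h1 : (p:ℤ)^k * u = (p:ℤ)^k * (u₁*u₂^2) := by
          rw [← hku, ← hint, hsplit, hk2]
        exact mul_left_cancel₀ (pow_ne_zero _ (by exact_mod_cast hp.ne_zero)) h1
      have hlegu : legendreSym p u = legendreSym p u₁ := by
        rw [huu]; exact leg_unit_sq hpu₂
      have hdiv : a / (p:ℤ)^(padicValInt p a) = u₁ := div_pow_val hu₁
      have hdivD : -D / (p:ℤ) = -D₁ := by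
        have hISD : -D = (p:ℤ) * (-D₁) := by rw [hD₁eq]; ring
        rw [hISD, Int.mul_ediv_cancel_left _ (by exact_mod_cast hp.ne_zero)]
      rw [legSym, dif_pos hp, legSym, dif_pos hp, hdiv, hdivD]
      rw [← hlegu]
      apply hodd
      intro hevk
      apply hvao
      obtain ⟨t, ht⟩ := hevk
      exact ⟨t - padicValInt p d, by omega⟩
    · -- ℚ₂ point
      refine ⟨(r:ℚ_[2]), (s:ℚ_[2]), 1, by simp, ?_⟩
      have h2 := congrArg (fun t : ℚ => (t : ℚ_[2])) hrs
      push_cast at h2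
      push_cast
      linear_combination -h2
  · rintro ⟨h1, h2, h3, h4, -⟩
    obtain ⟨e, a₀, hae, hsfa₀, he0, ha₀0, hapos⟩ := int_sq_mul_squarefree a ha
    have hD0 : D ≠ 0 := hDsf.ne_zero
    set g : ℕ := Int.gcd D a₀ with hgdef
    have hgD : ((g:ℤ)) ∣ D := Int.gcd_dvd_left _ _
    have hga : ((g:ℤ)) ∣ a₀ := Int.gcd_dvd_right _ _
    obtain ⟨D', hD'⟩ := hgD
    obtain ⟨a'', ha''⟩ := hga
    have hg0 : g ≠ 0 := fun h => hD0 (by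
      have := Int.gcd_eq_zero_iff.mp (hgdef ▸ h)
      exact this.1)
    have hgpos : (0:ℤ) < (g:ℤ) := by exact_mod_cast Nat.pos_of_ne_zero hg0
    have hD'0 : D' ≠ 0 := by rintro rfl; rw [mul_zero] at hD'; exact hD0 hD'
    have ha''0 : a'' ≠ 0 := by rintro rfl; rw [mul_zero] at ha''; exact ha₀0 ha''
    have sfgD' : Squarefree ((g:ℤ) * D') := hD' ▸ hDsf
    have sfga'' : Squarefree ((g:ℤ) * a'') := ha'' ▸ hsfa₀
    obtain ⟨relgD', sfg, sfD'⟩ := squarefree_mul_iff.mp sfgD'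
    obtain ⟨relga'', -, sfa''⟩ := squarefree_mul_iff.mp sfga''
    have cgD' : IsCoprime ((g:ℤ)) D' := relgD'.isCoprime
    have cga'' : IsCoprime ((g:ℤ)) a'' := relga''.isCoprime
    have cD'a'' : IsCoprime D' a'' := by
      rw [Int.isCoprime_iff_gcd_eq_one]
      by_contra hne
      set t : ℕ := Int.gcd D' a'' with htdef
      have ht0 : t ≠ 0 := fun h => hD'0 (Int.gcd_eq_zero_iff.mp (htdef ▸ h)).1
      have hq : t.minFac.Prime := Nat.minFac_prime hne
      set q : ℕ := t.minFac
      have hqpp : Prime (q:ℤ) := Nat.prime_iff_prime_int.mp hq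
      have hqD' : (q:ℤ) ∣ D' := dvd_trans (Int.natCast_dvd_natCast.mpr t.minFac_dvd) (Int.gcd_dvd_left _ _)
      have hqa'' : (q:ℤ) ∣ a'' := dvd_trans (Int.natCast_dvd_natCast.mpr t.minFac_dvd) (Int.gcd_dvd_right _ _)
      have hqg : (q:ℤ) ∣ ((g:ℤ)) := by
        rw [hgdef]
        exact Int.dvd_coe_gcd (by rw [hD']; exact hqD'.mul_left _) (by rw [ha'']; exact hqa''.mul_left _)
      have : (q:ℤ)*(q:ℤ) ∣ D := by rw [hD']; exact mul_dvd_mul hqg hqD'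
      exact hqpp.not_unit (hDsf _ this)
    have hsign : (-D') < 0 ∨ (-a'') < 0 := by
      rcases lt_trichotomy D' 0 with h | h | h
      · right
        have hDneg : D < 0 := by rw [hD']; exact mul_neg_of_pos_of_neg hgpos h
        have ha₀pos : 0 < a₀ := hapos (h1 hDneg)
        rw [ha''] at ha₀pos
        nlinarith
      · exact absurd h hD'0
      · left; omega
    -- Legendre hypotheses
    have hypA : ∀ q : ℕ, q.Prime → q ≠ 2 → (q:ℤ) ∣ ((g:ℤ)) →
        ∃ r : ℤ, (q:ℤ) ∣ r^2 + (-D')*(-a'') := by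
      intro q hq hq2 hqg
      haveI : Fact q.Prime := ⟨hq⟩
      have hqpp : Prime (q:ℤ) := Nat.prime_iff_prime_int.mp hq
      have hqD : (q:ℤ) ∣ D := by rw [hD']; exact hqg.mul_right D'
      have hqD' : ¬ (q:ℤ) ∣ D' := fun h => hqpp.not_unit (cgD'.isUnit_of_dvd' hqg h)
      have hqa'' : ¬ (q:ℤ) ∣ a'' := fun h => hqpp.not_unit (cga''.isUnit_of_dvd' hqg h)
      obtain ⟨g₁, hg₁⟩ := hqg
      have hqg₁ : ¬ (q:ℤ) ∣ g₁ := by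
        intro h
        obtain ⟨t, ht⟩ := h
        exact hqpp.not_unit (sfg _ ⟨t, by rw [hg₁, ht]; ring⟩)
      obtain ⟨u₂, hu₂, hpu₂⟩ := exists_val_decomp (p := q) he0
      have hsplit : a = (q:ℤ)^(1+2*padicValInt q e) * (g₁*a''*u₂^2) := by
        conv_lhs => rw [hae, ha'', hg₁, hu₂]
        ring
      have hqU : ¬ (q:ℤ) ∣ g₁*a''*u₂^2 := by
        intro hd
        rcases hqpp.dvd_mul.mp hd with h | h
        · rcases hqpp.dvd_mul.mp h with h' | h'
          exacts [hqg₁ h', hqa'' h']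
        · exact hpu₂ (hqpp.dvd_of_dvd_pow h)
      have hva : padicValInt q a = 1+2*padicValInt q e := padicValInt_eq_of hqU hsplit
      have hvodd : ¬ 2 ∣ padicValInt q a := by omega
      have h4' := h4 q hq hq2 hqD hvodd
      rw [legSym, dif_pos hq, legSym, dif_pos hq] at h4'
      have hdiva : a / (q:ℤ)^(padicValInt q a) = g₁*a''*u₂^2 := by
        rw [hva]; exact div_pow_val hsplit
      have hdivD : -D / (q:ℤ) = -(g₁*D') := by
        have hISD : -D = (q:ℤ) * (-(g₁*D')) := by rw [hD', hg₁]; ring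
        rw [hISD, Int.mul_ediv_cancel_left _ (by exact_mod_cast hq.ne_zero)]
      rw [hdiva, hdivD] at h4'
      have e1 : legendreSym q (g₁*a''*u₂^2) = legendreSym q g₁ * legendreSym q a'' := by
        rw [show g₁*a''*u₂^2 = (g₁*a'')*u₂^2 by ring, leg_unit_sq (by
          intro h; exact hpu₂ h), legendreSym.mul]
      have e2 : legendreSym q (-(g₁*D')) = legendreSym q g₁ * legendreSym q (-D') := by
        rw [show -(g₁*D') = g₁ * (-D') by ring, legendreSym.mul]
      rw [e1, e2] at h4'
      have hkey : legendreSym q a'' = legendreSym q (-D') := by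
        rcases leg_ne_zero hqg₁ with h | h <;> rw [h] at h4' <;> linarith
      apply exists_root_of_leg_one
      rw [show -((-D')*(-a'')) = (-D') * a'' by ring, legendreSym.mul, ← hkey]
      rcases leg_ne_zero hqa'' with h | h <;> rw [h] <;> norm_num
    have hypB : ∀ q : ℕ, q.Prime → q ≠ 2 → (q:ℤ) ∣ (-D') →
        ∃ r : ℤ, (q:ℤ) ∣ r^2 + ((g:ℤ))*(-a'') := by
      intro q hq hq2 hqD'
      rw [dvd_neg] at hqD'
      haveI : Fact q.Prime := ⟨hq⟩
      have hqpp : Prime (q:ℤ) := Nat.prime_iff_prime_int.mp hq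
      have hqD : (q:ℤ) ∣ D := by rw [hD']; exact hqD'.mul_left _
      have hqg : ¬ (q:ℤ) ∣ ((g:ℤ)) := fun h => hqpp.not_unit (cgD'.isUnit_of_dvd' h hqD')
      have hqa'' : ¬ (q:ℤ) ∣ a'' := fun h => hqpp.not_unit (cD'a''.isUnit_of_dvd' hqD' h)
      have hqa₀ : ¬ (q:ℤ) ∣ a₀ := by
        rw [ha'']
        intro hd
        rcases hqpp.dvd_mul.mp hd with h | h
        exacts [hqg h, hqa'' h]
      obtain ⟨u₂, hu₂, hpu₂⟩ := exists_val_decomp (p := q) he0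
      have hsplit : a = (q:ℤ)^(2*padicValInt q e) * (a₀*u₂^2) := by
        conv_lhs => rw [hae, hu₂]
        ring
      have hqU : ¬ (q:ℤ) ∣ a₀*u₂^2 := by
        intro hd
        rcases hqpp.dvd_mul.mp hd with h | h
        · exact hqa₀ h
        · exact hpu₂ (hqpp.dvd_of_dvd_pow h)
      have hva : padicValInt q a = 2*padicValInt q e := padicValInt_eq_of hqU hsplit
      have hvev : 2 ∣ padicValInt q a := by omega
      have h3' := h3 q hq hq2 hqD hvev
      rw [legSym, dif_pos hq] at h3'
      have hdiva : a / (q:ℤ)^(padicValInt q a) = a₀*u₂^2 := by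
        rw [hva]; exact div_pow_val hsplit
      rw [hdiva, leg_unit_sq hpu₂] at h3'
      apply exists_root_of_leg_one
      rw [show -(((g:ℤ))*(-a'')) = (g:ℤ) * a'' by ring, ← ha'']
      exact h3'
    have hypC : ∀ q : ℕ, q.Prime → q ≠ 2 → (q:ℤ) ∣ (-a'') →
        ∃ r : ℤ, (q:ℤ) ∣ r^2 + ((g:ℤ))*(-D') := by
      intro q hq hq2 hqa''
      rw [dvd_neg] at hqa''
      haveI : Fact q.Prime := ⟨hq⟩
      have hqpp : Prime (q:ℤ) := Nat.prime_iff_prime_int.mp hq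
      have hqg : ¬ (q:ℤ) ∣ ((g:ℤ)) := fun h => hqpp.not_unit (cga''.isUnit_of_dvd' h hqa'')
      have hqD' : ¬ (q:ℤ) ∣ D' := fun h => hqpp.not_unit (cD'a''.isUnit_of_dvd' h hqa'')
      have hqD : ¬ (q:ℤ) ∣ D := by
        rw [hD']
        intro hd
        rcases hqpp.dvd_mul.mp hd with h | h
        exacts [hqg h, hqD' h]
      have hq2D : ¬ (q:ℤ) ∣ 2*D := by
        intro hd
        rcases hqpp.dvd_mul.mp hd with h | h
        · have : q ∣ 2 := by exact_mod_cast h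
          exact hq2 ((Nat.prime_dvd_prime_iff_eq hq Nat.prime_two).mp this)
        · exact hqD h
      obtain ⟨t, ht⟩ := hqa''
      have hqt : ¬ (q:ℤ) ∣ t := by
        intro h
        obtain ⟨w, hw⟩ := h
        exact hqpp.not_unit (sfa'' _ ⟨w, by rw [ht, hw]; ring⟩)
      obtain ⟨u₂, hu₂, hpu₂⟩ := exists_val_decomp (p := q) he0
      have hsplit : a = (q:ℤ)^(1+2*padicValInt q e) * ((g:ℤ)*t*u₂^2) := by
        conv_lhs => rw [hae, ha'', ht, hu₂]
        ring
      have hqU : ¬ (q:ℤ) ∣ (g:ℤ)*t*u₂^2 := by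
        intro hd
        rcases hqpp.dvd_mul.mp hd with h | h
        · rcases hqpp.dvd_mul.mp h with h' | h'
          exacts [hqg h', hqt h']
        · exact hpu₂ (hqpp.dvd_of_dvd_pow h)
      have hva : padicValInt q a = 1+2*padicValInt q e := padicValInt_eq_of hqU hsplit
      have hvodd : ¬ 2 ∣ padicValInt q a := by omega
      have hlegD : legendreSym q D = 1 := by
        rcases leg_ne_zero hqD with h | h
        · exact h
        · exfalso
          apply hvodd
          apply h2 q hq hq2D
          rw [legSym, dif_pos hq]
          exact h
      apply exists_root_of_leg_one
      rw [show -(((g:ℤ))*(-D')) = (g:ℤ) * D' by ring, ← hD']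
      exact hlegD
    obtain ⟨X, Y, Z, hnt, hsol⟩ := legendre_full ((g:ℤ)) (-D') (-a'') hgpos
      (neg_ne_zero.mpr hD'0) (neg_ne_zero.mpr ha''0) hsign
      sfg (sf_neg sfD') (sf_neg sfa'')
      cgD'.neg_right cga''.neg_right (cD'a''.neg_left.neg_right)
      hypA hypB hypC
    have hZ0 : Z ≠ 0 := by
      rintro rfl
      have hsol' : (g:ℤ)*X^2 - D'*Y^2 = 0 := by linear_combination hsol
      have hY : Y ≠ 0 := by
        rintro rfl
        have hX2 : (g:ℤ)*X^2 = 0 := by linear_combination hsol'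
        have hX : X = 0 := by
          have := mul_eq_zero.mp hX2
          rcases this with h | h
          · exact absurd h (by positivity)
          · exact pow_eq_zero_iff (n := 2) (by norm_num) |>.mp h
        exact hnt ⟨hX, rfl, rfl⟩
      have hint2 : ((g:ℤ)*X)^2 = D*Y^2 := by
        linear_combination ((g:ℤ))*hsol' - Y^2*hD'
      apply rat_not_square hDsf hD1 ((((g:ℤ)*X : ℤ):ℚ)/((Y:ℤ):ℚ))
      have hYq : ((Y:ℤ):ℚ) ≠ 0 := Int.cast_ne_zero.mpr hY
      field_simp
      exact_mod_cast hint2.trans (mul_comm _ _)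
    have hint3 : (((g:ℤ))*X)^2 - D*Y^2 = a₀*Z^2 := by
      linear_combination ((g:ℤ))*hsol - Y^2*hD' - Z^2*ha''
    have heq0 : (e:ℚ) ≠ 0 := Int.cast_ne_zero.mpr he0
    have hZq : ((Z:ℤ):ℚ) ≠ 0 := Int.cast_ne_zero.mpr hZ0
    refine ⟨(((g:ℤ)*X : ℤ):ℚ), ((Y:ℤ):ℚ), ((Z:ℤ):ℚ)/((e:ℤ):ℚ), ?_, ?_⟩
    · intro hcon
      exact hZq (by
        have := hcon.2.2
        rcases div_eq_zero_iff.mp this with h | h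
        · exact h
        · exact absurd h heq0)
    · have hQ3 : ((((g:ℤ))*X : ℤ):ℚ)^2 - (D:ℚ)*((Y:ℤ):ℚ)^2 = ((a₀:ℤ):ℚ)*((Z:ℤ):ℚ)^2 := by
        exact_mod_cast hint3
      have haeQ : (a:ℚ) = ((e:ℤ):ℚ)^2*((a₀:ℤ):ℚ) := by exact_mod_cast hae
      rw [div_pow, haeQ]
      field_simp
      push_cast at hQ3 ⊢
      linear_combination hQ3
end
end
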